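/- arXiv:0907.0751 — 7 statements merged into one kernel-verified Lean document; each statement's English description precedes it below -/
import Mathlib

section
/- Let A be an n×n unitary complex matrix and X an n×n complex matrix with A + X invertible. Then A* + c_A(X) is invertible, i.e., c_A(X) lies in Ω(A*). -/
open Matrix

/-- If `A` is unitary and `A + X` is invertible, then `A* + c_A(X)` is invertible,
i.e. `c_A(X) ∈ Ω(A*)`. -/
theorem cayley_lands_in_Omega {n : ℕ} (A X : Matrix (Fin n) (Fin n) ℂ)
    (hA : A * Aᴴ = 1) (hAX : IsUnit (A + X)) :
    IsUnit (Aᴴ + (1 - Aᴴ * X) * (A + X)⁻¹) := by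
  have h1 : Aᴴ * A = 1 := mul_eq_one_comm.mp hA
  have hd : IsUnit (A + X).det := (Matrix.isUnit_iff_isUnit_det _).mp hAX
  have hcancel : Aᴴ * (A + X) * (A + X)⁻¹ = Aᴴ := by
    rw [Matrix.mul_assoc, Matrix.mul_nonsing_inv _ hd, Matrix.mul_one]
  have key : Aᴴ + (1 - Aᴴ * X) * (A + X)⁻¹ = (2 : ℂ) • (A + X)⁻¹ := by
    calc Aᴴ + (1 - Aᴴ * X) * (A + X)⁻¹
        = (Aᴴ * (A + X) + (1 - Aᴴ * X)) * (A + X)⁻¹ := by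
          rw [Matrix.add_mul, hcancel]
      _ = ((2 : ℂ) • (1 : Matrix (Fin n) (Fin n) ℂ)) * (A + X)⁻¹ := by
          rw [Matrix.mul_add, h1]
          congr 1
          rw [two_smul]
          abel
      _ = (2 : ℂ) • (A + X)⁻¹ := by rw [Matrix.smul_mul, Matrix.one_mul]
  rw [key, Matrix.isUnit_iff_isUnit_det, Matrix.det_smul]
  exact ((isUnit_of_invertible (2:ℂ)).pow _).mul ((A+X).isUnit_nonsing_inv_det hd)
end

section
/- Let A be an n×n unitary complex matrix and X an n×n complex matrix with A + X invertible. Then c_{A*}(c_A(X)) = X, where c_B(Y) = (I - B*Y)(B + Y)⁻¹. -/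
open Matrix

/-- The generalized Cayley transform centered at `B`: `c_B(Y) = (I - B*Y)(B + Y)⁻¹`. -/
noncomputable def cayley {n : ℕ} (B Y : Matrix (Fin n) (Fin n) ℂ) :
    Matrix (Fin n) (Fin n) ℂ :=
  (1 - Bᴴ * Y) * (B + Y)⁻¹

/-- If `A` is unitary and `A + X` is invertible, then `c_{A*}(c_A(X)) = X`. -/
theorem cayley_involutive {n : ℕ} (A X : Matrix (Fin n) (Fin n) ℂ)
    (hA : A * Aᴴ = 1) (hAX : IsUnit (A + X)) :
    cayley Aᴴ (cayley A X) = X := by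
  have hAA : Aᴴ * A = 1 := mul_eq_one_comm.mp hA
  have hd : IsUnit (A + X).det := (Matrix.isUnit_iff_isUnit_det _).mp hAX
  have h2 : (A + X)⁻¹ * (A + X) = 1 := Matrix.nonsing_inv_mul _ hd
  have key : (Aᴴ + cayley A X)⁻¹ = (2⁻¹ : ℂ) • (A + X) := by
    apply Matrix.inv_eq_right_inv
    have inner : (Aᴴ + cayley A X) * (A + X) = (2 : ℂ) • 1 := by
      rw [cayley, add_mul, mul_assoc, h2, mul_one, mul_add, hAA]
      rw [two_smul]
      noncomm_ring
    rw [Matrix.mul_smul, inner, smul_smul]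
    norm_num
  rw [cayley, key, conjTranspose_conjTranspose, Matrix.mul_smul]
  have inner2 : (1 - A * cayley A X) * (A + X) = (2 : ℂ) • X := by
    rw [cayley, ← mul_assoc, sub_mul, one_mul, mul_assoc, h2, mul_one,
      mul_sub, mul_one, ← mul_assoc, hA, one_mul, two_smul]
    noncomm_ring
  rw [inner2, smul_smul]
  norm_num
end

section
/- Let A be an n×n unitary complex matrix and X an invertible matrix with A + X invertible. Then A* + X⁻¹ is invertible and c_{A*}(X⁻¹) = -A · c_A(X) · A. -/
open Matrix

/-!
If `A` is unitary then `A* + X⁻¹ = A* (A + X) X⁻¹`, so `A* + X⁻¹` is invertible with inverse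
`X (A + X)⁻¹ A`. Substituting this inverse, both `c_{A*}(X⁻¹)` and `A c_A(X) A` reduce to
`±(X - A)(A + X)⁻¹ A`.
-/

namespace Matrix

variable {m α : Type*} [Fintype m] [DecidableEq m] [CommRing α] {A B X : Matrix m m α}

theorem add_nonsing_inv_eq_mul_add_mul (hBA : B * A = 1) (hX : IsUnit X) :
    B + X⁻¹ = B * (A + X) * X⁻¹ := by
  rw [mul_add, hBA, add_mul, one_mul,
    mul_nonsing_inv_cancel_right _ _ ((isUnit_iff_isUnit_det X).mp hX), add_comm]

theorem isUnit_add_nonsing_inv (hBA : B * A = 1) (hX : IsUnit X) (hAX : IsUnit (A + X)) :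
    IsUnit (B + X⁻¹) := by
  rw [add_nonsing_inv_eq_mul_add_mul hBA hX]
  exact ((IsUnit.of_mul_eq_one A hBA).mul hAX).mul (isUnit_nonsing_inv_iff.mpr hX)

theorem inv_add_nonsing_inv (hBA : B * A = 1) (hX : IsUnit X) :
    (B + X⁻¹)⁻¹ = X * (A + X)⁻¹ * A := by
  rw [add_nonsing_inv_eq_mul_add_mul hBA hX, mul_inv_rev, mul_inv_rev,
    nonsing_inv_nonsing_inv X ((isUnit_iff_isUnit_det X).mp hX), inv_eq_right_inv hBA, mul_assoc]

end Matrix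

theorem cayley_conjTranspose_nonsing_inv {n : ℕ} {A X : Matrix (Fin n) (Fin n) ℂ}
    (hA : Aᴴ * A = 1) (hX : IsUnit X) :
    cayley Aᴴ X⁻¹ = (X - A) * (A + X)⁻¹ * A := by
  rw [cayley, conjTranspose_conjTranspose, inv_add_nonsing_inv hA hX, ← mul_assoc, ← mul_assoc,
    sub_mul, one_mul, nonsing_inv_mul_cancel_right _ _ ((isUnit_iff_isUnit_det X).mp hX)]

theorem mul_cayley_mul {n : ℕ} {A X : Matrix (Fin n) (Fin n) ℂ} (hA : A * Aᴴ = 1) :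
    A * cayley A X * A = (A - X) * (A + X)⁻¹ * A := by
  rw [cayley, ← mul_assoc, mul_sub, mul_one, ← mul_assoc, hA, one_mul]

/-- If `A` is unitary, `X` is invertible and `A + X` is invertible, then
`A* + X⁻¹` is invertible and `c_{A*}(X⁻¹) = -A c_A(X) A`. -/
theorem cayley_of_inverse {n : ℕ} (A X : Matrix (Fin n) (Fin n) ℂ)
    (hA : A * Aᴴ = 1) (hX : IsUnit X) (hAX : IsUnit (A + X)) :
    IsUnit (Aᴴ + X⁻¹) ∧ cayley Aᴴ (X⁻¹) = -(A * cayley A X * A) := by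
  have hA' : Aᴴ * A = 1 := mul_eq_one_comm.mp hA
  refine ⟨isUnit_add_nonsing_inv hA' hX hAX, ?_⟩
  rw [cayley_conjTranspose_nonsing_inv hA' hX, mul_cayley_mul hA, ← neg_mul, ← neg_mul, neg_sub]
end

section
/- Let A be an n×n unitary complex matrix and Y a matrix with A*Y + Y*A = 0. Then c_A maps every unitary matrix in Ω(A) into the tangent space at A*, that is, if X is unitary with A + X invertible, then A·c_A(X) + (c_A(X))*·A* = 0. -/
open Matrix

/-- If `A` and `X` are unitary and `A + X` is invertible, then `c_A(X)` lies in
the tangent space to the unitary group at `A*`: `A·c_A(X) + c_A(X)*·A* = 0`. -/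
theorem cayley_maps_to_tangent {n : ℕ} (A X : Matrix (Fin n) (Fin n) ℂ)
    (hA : A * Aᴴ = 1) (hX : X * Xᴴ = 1) (hAX : IsUnit (A + X)) :
    A * ((1 - Aᴴ * X) * (A + X)⁻¹) + ((1 - Aᴴ * X) * (A + X)⁻¹)ᴴ * Aᴴ = 0 := by
  have hAd : Aᴴ * A = 1 := mul_eq_one_comm.mp hA
  have hXd : Xᴴ * X = 1 := mul_eq_one_comm.mp hX
  have hdet : IsUnit (A + X).det := (isUnit_iff_isUnit_det _).mp hAX
  have hdetH : IsUnit ((A + X)ᴴ).det := by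
    rw [det_conjTranspose]; exact hdet.star
  have h1 : A * ((1 - Aᴴ * X) * (A + X)⁻¹) = (A - X) * (A + X)⁻¹ := by
    rw [← mul_assoc]
    congr 1
    rw [mul_sub, mul_one, ← mul_assoc, hA, one_mul]
  have h2 : ((1 - Aᴴ * X) * (A + X)⁻¹)ᴴ * Aᴴ = ((A + X)ᴴ)⁻¹ * (Aᴴ - Xᴴ) := by
    rw [conjTranspose_mul, conjTranspose_nonsing_inv, mul_assoc]
    congr 1
    simp only [conjTranspose_sub, conjTranspose_one, conjTranspose_mul,
      conjTranspose_conjTranspose, sub_mul, one_mul, mul_assoc, hA, mul_one]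
  rw [h1, h2]
  have inner : (A + X)ᴴ * (A - X) + (Aᴴ - Xᴴ) * (A + X) = 0 := by
    simp only [conjTranspose_add, add_mul, sub_mul, mul_add, mul_sub, hAd, hXd]
    abel
  have e1 : (A - X) * (A + X)⁻¹ = ((A + X)ᴴ)⁻¹ * ((A + X)ᴴ * (A - X) * (A + X)⁻¹) := by
    rw [← mul_assoc, ← mul_assoc, nonsing_inv_mul _ hdetH, one_mul]
  calc (A - X) * (A + X)⁻¹ + ((A + X)ᴴ)⁻¹ * (Aᴴ - Xᴴ)
      = ((A + X)ᴴ)⁻¹ * (((A + X)ᴴ * (A - X) + (Aᴴ - Xᴴ) * (A + X)) * (A + X)⁻¹) := by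
        rw [add_mul, mul_add, ← e1, mul_assoc (Aᴴ - Xᴴ), mul_nonsing_inv _ hdet, mul_one]
    _ = 0 := by rw [inner, zero_mul, mul_zero]
end

section
/- Let X = diag(λ₁,…,λₙ) be a real diagonal matrix with 0 < λ₁ < ⋯ < λₙ. Then a unitary matrix A ∈ U(n) satisfies A* X = X A (the critical point equation for the height function h_X(A) = Re Tr(XA)) if and only if A = diag(ε₁,…,εₙ) with each εₖ = ±1. -/
open Matrix

/-- For `X = diag(λ₁,…,λₙ)` with `0 < λ₁ < ⋯ < λₙ` real, a unitary matrix `A`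
satisfies the critical point equation `A*X = XA` for the height function `h_X`
if and only if `A = diag(ε₁,…,εₙ)` with each `εₖ = ±1`. -/
theorem critical_points_diagonal {n : ℕ} (lam : Fin n → ℝ)
    (hpos : ∀ k, 0 < lam k) (hmono : StrictMono lam)
    (A : Matrix (Fin n) (Fin n) ℂ) (hA : A * Aᴴ = 1) :
    Aᴴ * Matrix.diagonal (fun k => (lam k : ℂ)) =
      Matrix.diagonal (fun k => (lam k : ℂ)) * A ↔
    ∃ ε : Fin n → ℂ, (∀ k, ε k = 1 ∨ ε k = -1) ∧ A = Matrix.diagonal ε := by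
  set v : Fin n → ℂ := fun k => (lam k : ℂ) with hv
  set D : Matrix (Fin n) (Fin n) ℂ := Matrix.diagonal v with hD
  constructor
  · intro h
    -- D = A * D * A
    have hADA : D = A * D * A := by
      calc D = (A * Aᴴ) * D := by rw [hA, one_mul]
        _ = A * (Aᴴ * D) := by rw [mul_assoc]
        _ = A * (D * A) := by rw [h]
        _ = A * D * A := by rw [mul_assoc]
    have h' : A * D = D * Aᴴ := by
      calc A * D = A * D * (A * Aᴴ) := by rw [hA, mul_one]
        _ = (A * D * A) * Aᴴ := by rw [← mul_assoc]
        _ = D * Aᴴ := by rw [← hADA]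
    have hcomm : D * D * A = A * (D * D) := by
      calc D * D * A = D * (D * A) := by rw [mul_assoc]
        _ = D * (Aᴴ * D) := by rw [h]
        _ = (D * Aᴴ) * D := by rw [mul_assoc]
        _ = (A * D) * D := by rw [← h']
        _ = A * (D * D) := by rw [mul_assoc]
    -- off-diagonal entries vanish
    have hoff : ∀ i j, i ≠ j → A i j = 0 := by
      intro i j hij
      have hDD : D * D = Matrix.diagonal (fun k => v k * v k) := by
        rw [hD, Matrix.diagonal_mul_diagonal]
      rw [hDD] at hcomm
      have hij' := congrFun (congrFun hcomm i) j
      rw [Matrix.diagonal_mul, Matrix.mul_diagonal] at hij'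
      have hne : v i * v i ≠ v j * v j := by
        intro hEq
        have : lam i * lam i = lam j * lam j := by
          have := hEq
          simp only [hv] at this
          exact_mod_cast this
        exact hmono.injective.ne hij (by nlinarith [hpos i, hpos j])
      have : (v i * v i - v j * v j) * A i j = 0 := by
        rw [sub_mul, hij', mul_comm]
        ring
      rcases mul_eq_zero.mp this with h0 | h0
      · exact absurd (sub_eq_zero.mp h0) hne
      · exact h0
    -- A is diagonal
    refine ⟨fun k => A k k, ?_, ?_⟩
    · intro k
      -- diagonal entries are real
      have hreal : star (A k k) = A k k := by
        have hk := congrFun (congrFun h k) k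
        rw [Matrix.mul_diagonal, Matrix.diagonal_mul] at hk
        have hvk : v k ≠ 0 := by
          simp only [hv]
          exact_mod_cast (hpos k).ne'
        have : Aᴴ k k * v k = A k k * v k := by rw [hk, mul_comm]
        have := mul_right_cancel₀ hvk this
        simpa [Matrix.conjTranspose_apply] using this
      -- unitarity at (k,k)
      have hk := congrFun (congrFun hA k) k
      rw [Matrix.mul_apply] at hk
      have hsum : (∑ l, A k l * Aᴴ l k) = A k k * Aᴴ k k := by
        rw [Finset.sum_eq_single k]
        · intro l _ hl
          rw [Matrix.conjTranspose_apply]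
          have : A k l = 0 := hoff k l (Ne.symm hl)
          rw [this, zero_mul]
        · intro hk'; exact absurd (Finset.mem_univ k) hk'
      rw [hsum, Matrix.conjTranspose_apply, hreal] at hk
      have hone : A k k ≠ 0 ∨ True := Or.inr trivial
      simp only [Matrix.one_apply_eq] at hk
      exact mul_self_eq_one_iff.mp hk
    · ext i j
      by_cases hij : i = j
      · subst hij; simp [Matrix.diagonal_apply_eq]
      · rw [Matrix.diagonal_apply_ne _ hij]
        exact hoff i j hij
  · rintro ⟨ε, hε, rfl⟩
    have hεr : ∀ k, star (ε k) = ε k := by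
      intro k
      rcases hε k with h1 | h1 <;> simp [h1]
    rw [Matrix.diagonal_conjTranspose, Matrix.diagonal_mul_diagonal,
      Matrix.diagonal_mul_diagonal]
    ext i j
    by_cases hij : i = j
    · subst hij
      simp only [Matrix.diagonal_apply_eq, Pi.star_apply]
      rw [hεr i, mul_comm]
    · rw [Matrix.diagonal_apply_ne _ hij, Matrix.diagonal_apply_ne _ hij]
end

section
/- Let A be a critical point of h_X on U(n) (so X* = A X A, A unitary), and let β₀ ∈ T_{A*}U(n) (i.e., Aβ₀ + β₀*A* = 0). Then the curve β(t) = exp(-XAt/2) · β₀ · exp(-AXt/2) stays in T_{A*}U(n) for all real t, i.e., Aβ(t) + β(t)*A* = 0. -/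
/-!
Write `E = exp(-t/2 · XA)` and `F = exp(-t/2 · AX)`. The critical point equation makes `XA` and
`AX` hermitian, hence so are `E` and `F`; and `A (XA) = (AX) A` gives `A E = F A`, so also
`E A* = A* F`. Therefore `A (E β₀ F) + (E β₀ F)* A* = F (A β₀ + β₀* A*) F = 0`.
-/

open Matrix

attribute [local instance] Matrix.linftyOpNormedRing Matrix.linftyOpNormedAlgebra

section StarMonoid

variable {R : Type*} [Monoid R] [StarMul R] {A X : R}

theorem isSelfAdjoint_mul_of_star_eq_mul_mul (hA : A * star A = 1) (hX : star X = A * X * A) :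
    IsSelfAdjoint (A * X) := by
  rw [IsSelfAdjoint, star_mul, hX, mul_assoc, hA, mul_one]

theorem isSelfAdjoint_mul_of_star_eq_mul_mul' (hA : star A * A = 1) (hX : star X = A * X * A) :
    IsSelfAdjoint (X * A) := by
  rw [IsSelfAdjoint, star_mul, hX, ← mul_assoc, ← mul_assoc, hA, one_mul]

end StarMonoid

theorem mul_add_star_mul_star_eq_of_mul_eq_mul {R : Type*} [Ring R] [StarRing R] {A E F : R}
    (hE : IsSelfAdjoint E) (hF : IsSelfAdjoint F) (h : A * E = F * A) (β : R) :
    A * (E * β * F) + star (E * β * F) * star A = F * (A * β + star β * star A) * F := by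
  have h' : E * star A = star A * F := by
    simpa only [star_mul, hE.star_eq, hF.star_eq] using congrArg star h
  calc A * (E * β * F) + star (E * β * F) * star A
      = A * E * β * F + F * star β * (E * star A) := by
        simp only [star_mul, hE.star_eq, hF.star_eq, mul_assoc]
    _ = F * A * β * F + F * star β * (star A * F) := by rw [h, h']
    _ = F * (A * β + star β * star A) * F := by noncomm_ring

/-- If `A ∈ U(n)` is a critical point of `h_X` (so `X* = AXA`) and
`β₀ ∈ T_{A*}U(n)` (i.e. `Aβ₀ + β₀*A* = 0`), then the curve
`β(t) = exp(-XAt/2)·β₀·exp(-AXt/2)` stays in `T_{A*}U(n)` for all real `t`. -/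
theorem curve_stays_tangent {n : ℕ} (A X β₀ : Matrix (Fin n) (Fin n) ℂ)
    (hA : A * Aᴴ = 1) (hcrit : Xᴴ = A * X * A)
    (hβ : A * β₀ + β₀ᴴ * Aᴴ = 0) (t : ℝ) :
    A * (NormedSpace.exp (((-(t / 2) : ℝ) : ℂ) • (X * A)) * β₀ *
          NormedSpace.exp (((-(t / 2) : ℝ) : ℂ) • (A * X))) +
      (NormedSpace.exp (((-(t / 2) : ℝ) : ℂ) • (X * A)) * β₀ *
          NormedSpace.exp (((-(t / 2) : ℝ) : ℂ) • (A * X)))ᴴ * Aᴴ = 0 := by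
  have hc : IsSelfAdjoint ((-(t / 2) : ℝ) : ℂ) := Complex.conj_ofReal _
  have hXA : IsSelfAdjoint (X * A) :=
    isSelfAdjoint_mul_of_star_eq_mul_mul' (mul_eq_one_comm.mp hA) hcrit
  have hAX : IsSelfAdjoint (A * X) := isSelfAdjoint_mul_of_star_eq_mul_mul hA hcrit
  have hsemiconj : A * NormedSpace.exp (((-(t / 2) : ℝ) : ℂ) • (X * A)) =
      NormedSpace.exp (((-(t / 2) : ℝ) : ℂ) • (A * X)) * A := by
    refine SemiconjBy.exp_right ?_
    simp only [SemiconjBy, Matrix.mul_smul, Matrix.smul_mul, mul_assoc]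
  have hexpand :=
    mul_add_star_mul_star_eq_of_mul_eq_mul (hc.smul hXA).exp (hc.smul hAX).exp hsemiconj β₀
  simp only [star_eq_conjTranspose] at hexpand
  rw [hexpand, hβ, mul_zero, zero_mul]
end

section
/- Let X ∈ M(n,ℂ) and set h_X(A) = Re Tr(X A). Then h_X is a Morse function on U(n) (all critical points nondegenerate) if X X* is invertible with n distinct eigenvalues. In particular, for X = diag(q₁,…,qₙ) with qₖ nonzero complex numbers of distinct moduli |q₁| < ⋯ < |qₙ|, every critical point A of h_X satisfies: the only solution β₀ ∈ T_{A*}U(n) of XAβ₀ + β₀AX = 0 is β₀ = 0. -/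
open Matrix

lemma mem_spectrum_iff_eval_charpoly {m : Type*} [Fintype m] [DecidableEq m]
    (M : Matrix m m ℂ) (μ : ℂ) :
    μ ∈ spectrum ℂ M ↔ M.charpoly.eval μ = 0 := by
  have hmap : (charmatrix M).map (Polynomial.eval μ) = algebraMap ℂ (Matrix m m ℂ) μ - M := by
    ext i j
    rcases eq_or_ne i j with rfl | h
    · simp [Matrix.algebraMap_eq_diagonal]
    · simp [h, Matrix.algebraMap_eq_diagonal, Matrix.diagonal_apply_ne _ h]
  have hdet : M.charpoly.eval μ = (algebraMap ℂ (Matrix m m ℂ) μ - M).det := by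
    rw [← hmap]
    show (Polynomial.evalRingHom μ) (charmatrix M).det = _
    rw [RingHom.map_det]
    rfl
  rw [spectrum.mem_iff, Matrix.isUnit_iff_isUnit_det, isUnit_iff_ne_zero, not_ne_iff, hdet]

/-- If `XX*` is invertible with `n` distinct eigenvalues, then the height
function `h_X(A) = Re Tr(XA)` is a Morse function on `U(n)`: at every critical
point `A` (i.e. unitary `A` with `X* = AXA`) the local model
`S(A) = {β₀ ∈ T_{A*}U(n) : XAβ₀ + β₀AX = 0}` of the critical set is zero. -/
theorem height_is_morse {n : ℕ} (X : Matrix (Fin n) (Fin n) ℂ)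
    (hXinv : IsUnit (X * Xᴴ)) (heig : (spectrum ℂ (X * Xᴴ)).ncard = n) :
    ∀ A : Matrix (Fin n) (Fin n) ℂ, A * Aᴴ = 1 → Xᴴ = A * X * A →
      ∀ β₀ : Matrix (Fin n) (Fin n) ℂ, A * β₀ + β₀ᴴ * Aᴴ = 0 →
        X * A * β₀ + β₀ * (A * X) = 0 → β₀ = 0 := by
  intro A hA hXA β₀ hTan hS
  rcases Nat.eq_zero_or_pos n with hn | hn
  · subst hn
    ext i j
    exact i.elim0
  -- `Y = X*A` is the key matrix; `Y² = X Xᴴ`.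
  have hYsq : (X * A) * (X * A) = X * Xᴴ := by
    rw [hXA, mul_assoc X A (X * A), mul_assoc A X A]
  -- `A` is a unit, with inverse `Aᴴ`
  have hAA' : Aᴴ * A = 1 := mul_eq_one_comm.mp hA
  set u : (Matrix (Fin n) (Fin n) ℂ)ˣ := ⟨A, Aᴴ, hA, hAA'⟩ with hu
  -- `A*X` is conjugate to `X*A`, hence has the same spectrum
  have hZeq : (u : Matrix (Fin n) (Fin n) ℂ) * (X * A) * ((u⁻¹ : _ˣ) : Matrix (Fin n) (Fin n) ℂ)
      = A * X := by
    show A * (X * A) * Aᴴ = A * X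
    rw [← mul_assoc, mul_assoc (A * X) A Aᴴ, hA, mul_one]
  have hspecZ : spectrum ℂ (A * X) = spectrum ℂ (X * A) := by
    rw [← hZeq]; exact spectrum.units_conjugate
  -- `X*A` is invertible
  have hYunit : IsUnit (X * A) := by
    have h := hXinv
    rw [← hYsq, Matrix.isUnit_iff_isUnit_det, Matrix.det_mul] at h
    rw [Matrix.isUnit_iff_isUnit_det]
    exact isUnit_of_mul_isUnit_left h
  -- spectral mapping for the square
  have hsq : spectrum ℂ (X * Xᴴ) = (fun k => k ^ 2) '' spectrum ℂ (X * A) := by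
    have h := spectrum.map_polynomial_aeval_of_degree_pos (X * A)
      ((Polynomial.X : Polynomial ℂ) ^ 2)
      (by rw [Polynomial.degree_X_pow]; exact_mod_cast (by norm_num : (0:ℕ) < 2))
    have haev : Polynomial.aeval (X * A) ((Polynomial.X : Polynomial ℂ) ^ 2)
        = X * Xᴴ := by
      rw [map_pow, Polynomial.aeval_X, sq, hYsq]
    rw [haev] at h
    simpa using h
  -- finiteness and cardinality bound of the spectrum
  have hfin : (spectrum ℂ (X * A)).Finite := Matrix.finite_spectrum _
  have hcard_le : (spectrum ℂ (X * A)).ncard ≤ n := by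
    have hsub : spectrum ℂ (X * A) ⊆ ((X * A).charpoly.roots.toFinset : Set ℂ) := by
      intro μ hμ
      rw [mem_spectrum_iff_eval_charpoly] at hμ
      simp only [Finset.coe_sort_coe, Multiset.mem_toFinset, Finset.mem_coe]
      rw [Polynomial.mem_roots ((X * A).charpoly_monic.ne_zero)]
      exact hμ
    calc (spectrum ℂ (X * A)).ncard
        ≤ (((X * A).charpoly.roots.toFinset : Set ℂ)).ncard :=
          Set.ncard_le_ncard hsub (Finset.finite_toSet _)
      _ = (X * A).charpoly.roots.toFinset.card := Set.ncard_coe_finset _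
      _ ≤ Multiset.card (X * A).charpoly.roots := Multiset.toFinset_card_le _
      _ ≤ (X * A).charpoly.natDegree := Polynomial.card_roots' _
      _ = n := by rw [Matrix.charpoly_natDegree_eq_dim, Fintype.card_fin]
  -- squaring is injective on the spectrum of `X*A`
  have himg : ((fun k => k ^ 2) '' spectrum ℂ (X * A)).ncard = n := by
    rw [← hsq]; exact heig
  have hinj : Set.InjOn (fun k => k ^ 2) (spectrum ℂ (X * A)) := by
    apply hfin.injOn_of_encard_image_eq
    have h1 : ((fun k => k ^ 2) '' spectrum ℂ (X * A)).encard = (n : ℕ∞) := by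
      rw [← (hfin.image _).cast_ncard_eq, himg]
    have h2 := Set.encard_image_le (fun k => k ^ 2) (spectrum ℂ (X * A))
    have h3 : (spectrum ℂ (X * A)).encard ≤ (n : ℕ∞) := by
      rw [← hfin.cast_ncard_eq]; exact_mod_cast hcard_le
    exact le_antisymm h2 (h3.trans_eq h1.symm)
  -- no two opposite eigenvalues
  have hkey : ∀ μ ∈ spectrum ℂ (X * A), -μ ∉ spectrum ℂ (X * A) := by
    intro μ hμ hneg
    have heq : μ = -μ := hinj hμ hneg (by ring)
    have hm0 : μ = 0 := by linear_combination heq / 2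
    exact (spectrum.zero_notMem_iff ℂ).mpr hYunit (hm0 ▸ hμ)
  -- the intertwining relation
  have hβZ : (X * A) * β₀ = β₀ * (-(A * X)) := by
    rw [mul_neg]
    exact eq_neg_of_add_eq_zero_left hS
  have hpow : ∀ k : ℕ, (X * A) ^ k * β₀ = β₀ * (-(A * X)) ^ k := by
    intro k
    induction k with
    | zero => simp
    | succ k ih => rw [pow_succ, pow_succ, mul_assoc, hβZ, ← mul_assoc, ih, mul_assoc]
  have haeval : ∀ p : Polynomial ℂ,
      (Polynomial.aeval (X * A) p) * β₀ = β₀ * Polynomial.aeval (-(A * X)) p := by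
    intro p
    induction p using Polynomial.induction_on' with
    | add p q hp hq => rw [map_add, map_add, add_mul, mul_add, hp, hq]
    | monomial k c =>
        rw [Polynomial.aeval_monomial, Polynomial.aeval_monomial, mul_assoc, hpow k,
          ← mul_assoc, Algebra.commutes c β₀, mul_assoc]
  -- Cayley–Hamilton for `-(A*X)` kills the right side
  have h1 : Polynomial.aeval (X * A) (-(A * X)).charpoly * β₀ = 0 := by
    rw [haeval, Matrix.aeval_self_charpoly, mul_zero]
  -- the left factor is invertible
  have hdeg : 0 < (-(A * X)).charpoly.degree := by
    rw [Matrix.charpoly_degree_eq_dim, Fintype.card_fin]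
    exact_mod_cast hn
  have hunit : IsUnit (Polynomial.aeval (X * A) (-(A * X)).charpoly) := by
    rw [← spectrum.zero_notMem_iff ℂ,
      spectrum.map_polynomial_aeval_of_degree_pos (X * A) _ hdeg]
    rintro ⟨μ, hμ, hev⟩
    have hμ' : μ ∈ spectrum ℂ (-(A * X)) :=
      (mem_spectrum_iff_eval_charpoly _ _).mpr hev
    rw [← spectrum.neg_eq, Set.mem_neg, hspecZ] at hμ'
    exact hkey (-μ) hμ' (by simpa using hμ)
  obtain ⟨w, hw⟩ := hunit
  calc β₀ = ↑w⁻¹ * (↑w * β₀) := by rw [← mul_assoc, Units.inv_mul, one_mul]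
    _ = 0 := by rw [hw, h1, mul_zero]
end
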